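/- arXiv:1903.01005 — 8 statements merged into one kernel-verified Lean document; each statement's English description precedes it below -/
import Mathlib

section
/- One-step lower bound for m: let t₀ ≥ 0 and suppose m(s) ≥ 0 for all s ∈ [t₀ - τ, t₀] and u(s) ≥ 0 for all s ∈ [t₀ - τ, t₀ + τ]. Then for every t ∈ [t₀, t₀ + τ], m(t) ≥ m(t₀) · exp( -(r/K) ∫_{t₀}^{t} u(s) ds ). -/
/-!
On `[t₀, t₀ + τ]` the delayed argument `t - τ` stays in the window where `m` and `u` are
nonnegative, so the delayed source term `2 (r/K) m(t-τ) u(t-τ)` is nonnegative and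
`m' ≥ -(r/K) u m`. With the integrating factor, `m t · exp ((r/K) ∫_{t₀}^t u)` is then
nondecreasing.
-/

open Set Real

theorem hasDerivAt_integral_of_continuousOn_Icc {a : ℝ → ℝ} {t₀ t₁ x : ℝ}
    (ha : ContinuousOn a (Icc t₀ t₁)) (hx : x ∈ Ioo t₀ t₁) :
    HasDerivAt (fun y => ∫ s in t₀..y, a s) (a x) x :=
  intervalIntegral.integral_hasDerivAt_right
    ((ha.mono (Icc_subset_Icc le_rfl hx.2.le)).intervalIntegrable_of_Icc hx.1.le)
    ((ha.mono Ioo_subset_Icc_self).stronglyMeasurableAtFilter isOpen_Ioo x hx)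
    (ha.continuousAt (Icc_mem_nhds hx.1 hx.2))

theorem mul_exp_neg_integral_le_of_hasDerivAt {f f' a : ℝ → ℝ} {t₀ t₁ : ℝ}
    (hf : ContinuousOn f (Icc t₀ t₁)) (ha : ContinuousOn a (Icc t₀ t₁))
    (hf' : ∀ x ∈ Ioo t₀ t₁, HasDerivAt f (f' x) x)
    (hle : ∀ x ∈ Ioo t₀ t₁, -(a x * f x) ≤ f' x) :
    ∀ t ∈ Icc t₀ t₁, f t₀ * exp (-∫ s in t₀..t, a s) ≤ f t := by
  intro t ht
  set A : ℝ → ℝ := fun y => ∫ s in t₀..y, a s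
  have hA : ContinuousOn A (Icc t₀ t₁) := by
    have h := intervalIntegral.continuousOn_primitive_interval (μ := MeasureTheory.volume)
      (a := t₀) (b := t₁) (f := a)
    rw [uIcc_of_le (ht.1.trans ht.2)] at h
    exact h ha.integrableOn_Icc
  have hmono : MonotoneOn (fun y => f y * exp (A y)) (Icc t₀ t₁) := by
    refine monotoneOn_of_hasDerivWithinAt_nonneg (convex_Icc t₀ t₁)
      (hf.mul (continuous_exp.comp_continuousOn hA))
      (f' := fun x => exp (A x) * (f' x + a x * f x)) (fun x hx => ?_) (fun x hx => ?_)
    · rw [interior_Icc] at hx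
      have hA' := (hasDerivAt_integral_of_continuousOn_Icc ha hx).exp
      exact ((hf' x hx).mul hA').hasDerivWithinAt.congr_deriv (by ring)
    · rw [interior_Icc] at hx
      have : 0 ≤ f' x + a x * f x := by linarith [hle x hx]
      positivity
  have h := hmono (left_mem_Icc.2 (ht.1.trans ht.2)) ht ht.1
  simp only [A, intervalIntegral.integral_same, exp_zero, mul_one] at h
  calc f t₀ * exp (-A t) ≤ f t * exp (A t) * exp (-A t) := by gcongr
    _ = f t := by rw [mul_assoc, ← exp_add, add_neg_cancel, exp_zero, mul_one]

theorem stmt_4_general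
    (K r τ : ℝ) (hK : 0 < K) (hr : 0 < r)
    (m u : ℝ → ℝ)
    (hdm : ∀ t : ℝ, 0 ≤ t →
      HasDerivAt m (-(r / K) * m t * u t + 2 * (r / K) * m (t - τ) * u (t - τ)) t)
    (hdu : ∀ t : ℝ, 0 ≤ t → HasDerivAt u (-(r / K) * m t * u t) t)
    (t₀ : ℝ) (ht₀ : 0 ≤ t₀)
    (hmnn : ∀ s ∈ Set.Icc (t₀ - τ) t₀, 0 ≤ m s)
    (hunn : ∀ s ∈ Set.Icc (t₀ - τ) (t₀ + τ), 0 ≤ u s)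
:
    ∀ t ∈ Set.Icc t₀ (t₀ + τ),
      m t₀ * Real.exp (-(r / K) * ∫ s in t₀..t, u s) ≤ m t := by
  intro t ht
  have hm : ContinuousOn m (Icc t₀ (t₀ + τ)) := fun x hx =>
    (hdm x (ht₀.trans hx.1)).continuousAt.continuousWithinAt
  have hu : ContinuousOn u (Icc t₀ (t₀ + τ)) := fun x hx =>
    (hdu x (ht₀.trans hx.1)).continuousAt.continuousWithinAt
  have hm_deriv_ge : ∀ x ∈ Ioo t₀ (t₀ + τ),
      -(r / K * u x * m x) ≤ -(r / K) * m x * u x + 2 * (r / K) * m (x - τ) * u (x - τ) := by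
    rintro x ⟨hx₀, hx₁⟩
    have hm_delay := hmnn (x - τ) ⟨by linarith, by linarith⟩
    have hu_delay := hunn (x - τ) ⟨by linarith, by linarith⟩
    have : 0 ≤ 2 * (r / K) * m (x - τ) * u (x - τ) := by positivity
    linarith
  have h := mul_exp_neg_integral_le_of_hasDerivAt (a := fun s => r / K * u s) hm
    (continuousOn_const.mul hu)
    (fun x hx => hdm x (ht₀.trans hx.1.le)) hm_deriv_ge t ht
  simpa only [intervalIntegral.integral_const_mul, neg_mul] using h

theorem stmt_4
    (K r τ : ℝ) (hK : 0 < K) (hr : 0 < r) (hτ : 0 < τ)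
    (m p q u : ℝ → ℝ)
    (hmc : Continuous m) (hpc : Continuous p) (hqc : Continuous q) (huc : Continuous u)
    (hdm : ∀ t : ℝ, 0 ≤ t →
      HasDerivAt m (-(r / K) * m t * u t + 2 * (r / K) * m (t - τ) * u (t - τ)) t)
    (hdp : ∀ t : ℝ, 0 ≤ t →
      HasDerivAt p ((r / K) * m t * u t - (r / K) * m (t - τ) * u (t - τ)) t)
    (hdq : ∀ t : ℝ, 0 ≤ t →
      HasDerivAt q ((r / K) * m t * u t - (r / K) * m (t - τ) * u (t - τ)) t)
    (hdu : ∀ t : ℝ, 0 ≤ t → HasDerivAt u (-(r / K) * m t * u t) t)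
    (t₀ : ℝ) (ht₀ : 0 ≤ t₀)
    (hmnn : ∀ s ∈ Set.Icc (t₀ - τ) t₀, 0 ≤ m s)
    (hunn : ∀ s ∈ Set.Icc (t₀ - τ) (t₀ + τ), 0 ≤ u s)
:
    ∀ t ∈ Set.Icc t₀ (t₀ + τ),
      m t₀ * Real.exp (-(r / K) * ∫ s in t₀..t, u s) ≤ m t :=
  stmt_4_general K r τ hK hr m u hdm hdu t₀ ht₀ hmnn hunn
end

section
/- Nonnegativity of the motile population: if m(θ) ≥ 0 for all θ ∈ [-τ, 0] and u(s) ≥ 0 for all s ≥ -τ, then m(t) ≥ 0 for all t ≥ 0. -/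
/-!
Write the motile equation as `m' = -a m + c m(· - τ)` with `a = (r/K) u` and
`c = 2 (r/K) u(· - τ)`, both nonnegative on the relevant range. Multiplying by the integrating
factor `exp (∫₀ᵗ a)` turns it into `(m e^A)' = e^A c m(· - τ)`, so on each window
`[0, (n+1)τ]` the product is nondecreasing as soon as `m ≥ 0` on `[-τ, nτ]`. Induction on `n`
(the method of steps) propagates nonnegativity from the initial history to all `t ≥ 0`.
-/

open Set

theorem nonneg_of_hasDerivAt_eq_neg_mul_add {f a b : ℝ → ℝ} {t₀ T : ℝ} (ha : Continuous a)
    (hf : ∀ t ∈ Icc t₀ T, HasDerivAt f (-a t * f t + b t) t)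
    (hb : ∀ t ∈ Icc t₀ T, 0 ≤ b t) (hf₀ : 0 ≤ f t₀) :
    ∀ t ∈ Icc t₀ T, 0 ≤ f t := by
  set A : ℝ → ℝ := fun s => ∫ x in t₀..s, a x
  have hA : ∀ s, HasDerivAt A (a s) s := fun s => (ha.integral_hasStrictDerivAt t₀ s).hasDerivAt
  set g : ℝ → ℝ := fun s => f s * Real.exp (A s)
  have hg : ∀ s ∈ Icc t₀ T, HasDerivAt g (Real.exp (A s) * b s) s := fun s hs =>
    ((hf s hs).mul (hA s).exp).congr_deriv (by ring)
  have hg_mono : MonotoneOn g (Icc t₀ T) :=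
    monotoneOn_of_hasDerivWithinAt_nonneg (convex_Icc t₀ T) (HasDerivAt.continuousOn hg)
      (fun s hs => (hg s (interior_subset hs)).hasDerivWithinAt)
      (fun s hs => mul_nonneg (Real.exp_nonneg _) (hb s (interior_subset hs)))
  intro t ht
  have hg_t : 0 ≤ g t := by
    have hg₀ : g t₀ = f t₀ := by simp [g, A]
    calc 0 ≤ g t₀ := hg₀ ▸ hf₀
      _ ≤ g t := hg_mono (left_mem_Icc.2 (ht.1.trans ht.2)) ht ht.1
  exact nonneg_of_mul_nonneg_left hg_t (Real.exp_pos _)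

theorem nonneg_of_hasDerivAt_delay {f a c : ℝ → ℝ} {τ : ℝ} (hτ : 0 < τ) (ha : Continuous a)
    (hf : ∀ t, 0 ≤ t → HasDerivAt f (-a t * f t + c t * f (t - τ)) t)
    (hc : ∀ t, 0 ≤ t → 0 ≤ c t) (hf_hist : ∀ θ ∈ Icc (-τ) 0, 0 ≤ f θ) :
    ∀ t, 0 ≤ t → 0 ≤ f t := by
  have steps : ∀ n : ℕ, ∀ t ∈ Icc (-τ) (n * τ), 0 ≤ f t := by
    intro n
    induction n with
    | zero => simpa using hf_hist
    | succ n ih =>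
      rintro t ⟨ht_lo, ht_hi⟩
      rcases le_or_gt t 0 with ht₀ | ht₀
      · exact hf_hist t ⟨ht_lo, ht₀⟩
      refine nonneg_of_hasDerivAt_eq_neg_mul_add ha (fun s hs => hf s hs.1) ?_
        (hf_hist 0 ⟨by linarith, le_rfl⟩) t ⟨ht₀.le, le_rfl⟩
      rintro s ⟨hs₀, hst⟩
      push_cast at ht_hi
      exact mul_nonneg (hc s hs₀) (ih (s - τ) ⟨by linarith, by linarith⟩)
  intro t ht
  obtain ⟨n, hn⟩ := exists_nat_ge (t / τ)
  exact steps n t ⟨by linarith, (div_le_iff₀ hτ).1 hn⟩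

theorem stmt_5_general
    (K r τ : ℝ) (hK : 0 < K) (hr : 0 < r) (hτ : 0 < τ)
    (m u : ℝ → ℝ)
    (huc : Continuous u)
    (hdm : ∀ t : ℝ, 0 ≤ t →
      HasDerivAt m (-(r / K) * m t * u t + 2 * (r / K) * m (t - τ) * u (t - τ)) t)
    (hmnn : ∀ θ ∈ Set.Icc (-τ) (0 : ℝ), 0 ≤ m θ)
    (hunn : ∀ s : ℝ, -τ ≤ s → 0 ≤ u s)
:
    ∀ t : ℝ, 0 ≤ t → 0 ≤ m t := by
  have hrK : 0 < r / K := div_pos hr hK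
  refine nonneg_of_hasDerivAt_delay (a := fun t => r / K * u t)
    (c := fun t => 2 * (r / K) * u (t - τ)) hτ (continuous_const.mul huc)
    (fun t ht => (hdm t ht).congr_deriv (by ring)) (fun t ht => ?_) hmnn
  have := hunn (t - τ) (by linarith)
  positivity

theorem stmt_5
    (K r τ : ℝ) (hK : 0 < K) (hr : 0 < r) (hτ : 0 < τ)
    (m p q u : ℝ → ℝ)
    (hmc : Continuous m) (hpc : Continuous p) (hqc : Continuous q) (huc : Continuous u)
    (hdm : ∀ t : ℝ, 0 ≤ t →
      HasDerivAt m (-(r / K) * m t * u t + 2 * (r / K) * m (t - τ) * u (t - τ)) t)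
    (hdp : ∀ t : ℝ, 0 ≤ t →
      HasDerivAt p ((r / K) * m t * u t - (r / K) * m (t - τ) * u (t - τ)) t)
    (hdq : ∀ t : ℝ, 0 ≤ t →
      HasDerivAt q ((r / K) * m t * u t - (r / K) * m (t - τ) * u (t - τ)) t)
    (hdu : ∀ t : ℝ, 0 ≤ t → HasDerivAt u (-(r / K) * m t * u t) t)
    (hmnn : ∀ θ ∈ Set.Icc (-τ) (0 : ℝ), 0 ≤ m θ)
    (hunn : ∀ s : ℝ, -τ ≤ s → 0 ≤ u s)
:
    ∀ t : ℝ, 0 ≤ t → 0 ≤ m t :=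
  stmt_5_general K r τ hK hr hτ m u huc hdm hmnn hunn
end

section
/- Uniform boundedness of feasible solutions: under the feasibility conditions, for every t ≥ 0 each of m(t), p(t), q(t), u(t) lies in the interval [0, K]. -/
/-!
The factor `u` satisfies a linear equation `u' = -(r/K) m u` and `m` satisfies
`m' = -(r/K) u m + g` with `g(t) = 2(r/K) m(t-τ) u(t-τ)`; multiplying by the integrating factor
`exp ((r/K) ∫₀ᵗ m)` (resp. `exp ((r/K) ∫₀ᵗ u)`) shows that `u` stays nonnegative, and that `m` does on
`[-τ, nτ]` once it does on `[-τ, (n-1)τ]` (method of steps). The initial condition on `p(0)` makes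
`p(t) - (r/K) ∫_{t-τ}^t m u` constant zero, so `p ≥ 0`, and likewise `q ≥ 0`. Finally
`m + p + q + u` has zero derivative, so it stays equal to `K`, which gives the upper bounds.
-/

open Set

theorem eq_of_hasDerivAt_eq_zero {E : Type*} [NormedAddCommGroup E] [NormedSpace ℝ E]
    {f : ℝ → E} {a b : ℝ} (hf : ∀ x, a ≤ x → HasDerivAt f 0 x) (hab : a ≤ b) : f b = f a :=
  constant_of_has_deriv_right_zero (fun x hx => (hf x hx.1).continuousAt.continuousWithinAt)
    (fun x hx => (hf x hx.1).hasDerivWithinAt) b ⟨hab, le_rfl⟩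

theorem le_of_hasDerivAt_nonneg {f f' : ℝ → ℝ} {a b : ℝ}
    (hf : ∀ x ∈ Icc a b, HasDerivAt f (f' x) x) (hf' : ∀ x ∈ Ioo a b, 0 ≤ f' x) (hab : a ≤ b) :
    f a ≤ f b := by
  have hmono : MonotoneOn f (Icc a b) := by
    refine monotoneOn_of_hasDerivWithinAt_nonneg (f' := f') (convex_Icc a b)
      (fun x hx => (hf x hx).continuousAt.continuousWithinAt) (fun x hx => ?_) (fun x hx => ?_)
    · rw [interior_Icc] at hx
      exact (hf x (Ioo_subset_Icc_self hx)).hasDerivWithinAt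
    · rw [interior_Icc] at hx
      exact hf' x hx
  exact hmono (left_mem_Icc.2 hab) (right_mem_Icc.2 hab) hab

theorem nonneg_of_hasDerivAt_linear {f c g : ℝ → ℝ} (hc : Continuous c)
    (hf : ∀ x, 0 ≤ x → HasDerivAt f (-c x * f x + g x) x) (hf0 : 0 ≤ f 0)
    {t : ℝ} (ht : 0 ≤ t) (hg : ∀ x ∈ Ioo 0 t, 0 ≤ g x) : 0 ≤ f t := by
  set E : ℝ → ℝ := fun x => Real.exp (∫ s in (0 : ℝ)..x, c s)
  have hE : ∀ x, HasDerivAt E (E x * c x) x := fun x =>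
    (hc.integral_hasStrictDerivAt 0 x).hasDerivAt.exp
  have hfE : ∀ x, 0 ≤ x → HasDerivAt (fun y => f y * E y) (g x * E x) x := fun x hx =>
    ((hf x hx).mul (hE x)).congr_deriv (by ring)
  have hmono : f 0 * E 0 ≤ f t * E t :=
    le_of_hasDerivAt_nonneg (fun x hx => hfE x hx.1)
      (fun x hx => mul_nonneg (hg x hx) (Real.exp_pos _).le) ht
  have hE0 : E 0 = 1 := by simp [E]
  rw [hE0, mul_one] at hmono
  exact nonneg_of_mul_nonneg_left (hf0.trans hmono) (Real.exp_pos _)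

theorem forall_ge_neg_of_delay_step {τ : ℝ} (hτ : 0 < τ) {P : ℝ → Prop}
    (hinit : ∀ s ∈ Icc (-τ) 0, P s)
    (hstep : ∀ t, 0 < t → (∀ s ∈ Icc (-τ) (t - τ), P s) → P t) :
    ∀ t, -τ ≤ t → P t := by
  have hsteps : ∀ n : ℕ, ∀ s ∈ Icc (-τ) (n * τ), P s := by
    intro n
    induction n with
    | zero => simpa using hinit
    | succ n ih =>
      rintro s ⟨hs, hsn⟩
      rcases le_or_gt s 0 with hs0 | hs0
      · exact hinit s ⟨hs, hs0⟩
      · refine hstep s hs0 fun x hx => ih x ⟨hx.1, ?_⟩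
        push_cast at hsn
        linarith [hx.2]
  intro t ht
  obtain ⟨n, hn⟩ := exists_nat_ge (t / τ)
  exact hsteps n t ⟨ht, (div_le_iff₀ hτ).1 hn⟩

theorem hasDerivAt_integral_window {f : ℝ → ℝ} (hf : Continuous f) (τ x : ℝ) :
    HasDerivAt (fun y => ∫ s in (y - τ)..y, f s) (f x - f (x - τ)) x := by
  have hsplit : (fun y => ∫ s in (y - τ)..y, f s) =
      fun y => (∫ s in (0 : ℝ)..y, f s) - ∫ s in (0 : ℝ)..(y - τ), f s := by
    ext y
    exact (intervalIntegral.integral_interval_sub_left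
      (hf.intervalIntegrable _ _) (hf.intervalIntegrable _ _)).symm
  rw [hsplit]
  have hshift : HasDerivAt (fun y => ∫ s in (0 : ℝ)..(y - τ), f s) (f (x - τ)) x := by
    simpa [Function.comp_def] using (hf.integral_hasStrictDerivAt 0 (x - τ)).hasDerivAt.comp x
      ((hasDerivAt_id x).sub_const τ)
  exact (hf.integral_hasStrictDerivAt 0 x).hasDerivAt.sub hshift

theorem eq_mul_integral_of_hasDerivAt_delay {f g : ℝ → ℝ} (hf : Continuous f) {c τ : ℝ}
    (hg : ∀ x, 0 ≤ x → HasDerivAt g (c * f x - c * f (x - τ)) x)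
    (hg0 : g 0 = c * ∫ s in (-τ)..(0 : ℝ), f s) {t : ℝ} (ht : 0 ≤ t) :
    g t = c * ∫ s in (t - τ)..t, f s := by
  have hconst := eq_of_hasDerivAt_eq_zero
    (f := fun y => g y - c * ∫ s in (y - τ)..y, f s) (fun x hx =>
      ((hg x hx).sub ((hasDerivAt_integral_window hf τ x).const_mul c)).congr_deriv
        (by ring)) ht
  simp only [zero_sub, hg0, sub_self] at hconst
  exact sub_eq_zero.1 hconst

theorem nonneg_of_hasDerivAt_delay_s8 {f g : ℝ → ℝ} (hf : Continuous f) {c τ : ℝ} (hc : 0 ≤ c)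
    (hτ : 0 ≤ τ) (hf_nonneg : ∀ s, -τ ≤ s → 0 ≤ f s)
    (hg : ∀ x, 0 ≤ x → HasDerivAt g (c * f x - c * f (x - τ)) x)
    (hg0 : g 0 = c * ∫ s in (-τ)..(0 : ℝ), f s) {t : ℝ} (ht : 0 ≤ t) : 0 ≤ g t := by
  rw [eq_mul_integral_of_hasDerivAt_delay hf hg hg0 ht]
  exact mul_nonneg hc (intervalIntegral.integral_nonneg (by linarith) fun s hs =>
    hf_nonneg s (by linarith [hs.1]))

theorem stmt_8_general
    (K r τ : ℝ) (hK : 0 < K) (hr : 0 < r) (hτ : 0 < τ)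
    (m p q u : ℝ → ℝ)
    (hmc : Continuous m) (huc : Continuous u)
    (hdm : ∀ t : ℝ, 0 ≤ t →
      HasDerivAt m (-(r / K) * m t * u t + 2 * (r / K) * m (t - τ) * u (t - τ)) t)
    (hdp : ∀ t : ℝ, 0 ≤ t →
      HasDerivAt p ((r / K) * m t * u t - (r / K) * m (t - τ) * u (t - τ)) t)
    (hdq : ∀ t : ℝ, 0 ≤ t →
      HasDerivAt q ((r / K) * m t * u t - (r / K) * m (t - τ) * u (t - τ)) t)
    (hdu : ∀ t : ℝ, 0 ≤ t → HasDerivAt u (-(r / K) * m t * u t) t)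
    (hmnn : ∀ θ ∈ Set.Icc (-τ) (0 : ℝ), 0 ≤ m θ)
    (hunn : ∀ θ ∈ Set.Icc (-τ) (0 : ℝ), 0 ≤ u θ)
    (hsum : m 0 + p 0 + q 0 + u 0 = K)
    (hpin : p 0 = (r / K) * ∫ s in (-τ)..(0 : ℝ), m s * u s)
    (hqin : q 0 = (r / K) * ∫ s in (-τ)..(0 : ℝ), m s * u s)
:
    ∀ t : ℝ, 0 ≤ t →
      m t ∈ Set.Icc (0 : ℝ) K ∧ p t ∈ Set.Icc (0 : ℝ) K ∧
      q t ∈ Set.Icc (0 : ℝ) K ∧ u t ∈ Set.Icc (0 : ℝ) K := by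
  have ha : 0 ≤ r / K := by positivity
  have h0 : (0 : ℝ) ∈ Icc (-τ) 0 := ⟨by linarith, le_rfl⟩
  have hu : ∀ t, -τ ≤ t → 0 ≤ u t := fun t ht => (le_or_gt t 0).elim (fun h => hunn t ⟨ht, h⟩)
    fun h => nonneg_of_hasDerivAt_linear (hmc.const_mul (r / K)) (g := 0)
      (fun x hx => (hdu x hx).congr_deriv (by simp)) (hunn 0 h0) h.le fun _ _ => le_rfl
  have hm : ∀ t, -τ ≤ t → 0 ≤ m t := forall_ge_neg_of_delay_step hτ hmnn fun t ht hih =>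
    nonneg_of_hasDerivAt_linear (huc.const_mul (r / K))
      (g := fun x => 2 * (r / K) * m (x - τ) * u (x - τ))
      (fun x hx => (hdm x hx).congr_deriv (by ring)) (hmnn 0 h0) ht.le fun x hx => by
        have := hih (x - τ) ⟨by linarith [hx.1], by linarith [hx.2]⟩
        have := hu (x - τ) (by linarith [hx.1])
        positivity
  have hmu : ∀ s, -τ ≤ s → 0 ≤ (m * u) s := fun s hs => mul_nonneg (hm s hs) (hu s hs)
  intro t ht
  have hp := nonneg_of_hasDerivAt_delay_s8 (hmc.mul huc) ha hτ.le hmu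
    (fun x hx => (hdp x hx).congr_deriv (by simp only [Pi.mul_apply]; ring)) hpin ht
  have hq := nonneg_of_hasDerivAt_delay_s8 (hmc.mul huc) ha hτ.le hmu
    (fun x hx => (hdq x hx).congr_deriv (by simp only [Pi.mul_apply]; ring)) hqin ht
  have htotal : m t + p t + q t + u t = K := hsum ▸ eq_of_hasDerivAt_eq_zero (fun x hx =>
    ((((hdm x hx).add (hdp x hx)).add (hdq x hx)).add (hdu x hx)).congr_deriv (by ring)) ht
  have := hm t (by linarith)
  have := hu t (by linarith)
  refine ⟨⟨?_, ?_⟩, ⟨?_, ?_⟩, ⟨?_, ?_⟩, ⟨?_, ?_⟩⟩ <;> linarith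

theorem stmt_8
    (K r τ : ℝ) (hK : 0 < K) (hr : 0 < r) (hτ : 0 < τ)
    (m p q u : ℝ → ℝ)
    (hmc : Continuous m) (hpc : Continuous p) (hqc : Continuous q) (huc : Continuous u)
    (hdm : ∀ t : ℝ, 0 ≤ t →
      HasDerivAt m (-(r / K) * m t * u t + 2 * (r / K) * m (t - τ) * u (t - τ)) t)
    (hdp : ∀ t : ℝ, 0 ≤ t →
      HasDerivAt p ((r / K) * m t * u t - (r / K) * m (t - τ) * u (t - τ)) t)
    (hdq : ∀ t : ℝ, 0 ≤ t →
      HasDerivAt q ((r / K) * m t * u t - (r / K) * m (t - τ) * u (t - τ)) t)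
    (hdu : ∀ t : ℝ, 0 ≤ t → HasDerivAt u (-(r / K) * m t * u t) t)
    (hmnn : ∀ θ ∈ Set.Icc (-τ) (0 : ℝ), 0 ≤ m θ)
    (hpnn : ∀ θ ∈ Set.Icc (-τ) (0 : ℝ), 0 ≤ p θ)
    (hqnn : ∀ θ ∈ Set.Icc (-τ) (0 : ℝ), 0 ≤ q θ)
    (hunn : ∀ θ ∈ Set.Icc (-τ) (0 : ℝ), 0 ≤ u θ)
    (hsum : m 0 + p 0 + q 0 + u 0 = K)
    (hpin : p 0 = (r / K) * ∫ s in (-τ)..(0 : ℝ), m s * u s)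
    (hqin : q 0 = (r / K) * ∫ s in (-τ)..(0 : ℝ), m s * u s)
:
    ∀ t : ℝ, 0 ≤ t →
      m t ∈ Set.Icc (0 : ℝ) K ∧ p t ∈ Set.Icc (0 : ℝ) K ∧
      q t ∈ Set.Icc (0 : ℝ) K ∧ u t ∈ Set.Icc (0 : ℝ) K :=
  stmt_8_general K r τ hK hr hτ m p q u hmc huc hdm hdp hdq hdu hmnn hunn hsum hpin hqin
end

section
/- Monotonicity of the empty-site count (Lyapunov property of V(φ) = φ₄(0)): under the feasibility conditions, u is nonincreasing on [0, ∞), and consequently the total cell count m(t) + p(t) + q(t) is nondecreasing on [0, ∞) and satisfies m(t) + p(t) + q(t) ≥ K - u(0) for all t ≥ 0. -/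
/-!
Multiplying `u' = -(r/K) m u` by the integrating factor `exp ((r/K) ∫₀ᵗ m)` shows that `u` keeps
the sign of `u 0`. Similarly `m exp ((r/K) ∫₀ᵗ u)` has derivative
`2 (r/K) m(t-τ) u(t-τ) exp (…)`, so by the method of steps `m ≥ 0` propagates from `[-τ, 0]` to
each `[nτ, (n+1)τ]`. With `m, u ≥ 0`, `u' = -(r/K) m u ≤ 0` and `(m + p + q)' = (r/K) m u ≥ 0`.
-/

open Set

lemma monotoneOn_of_forall_hasDerivAt_nonneg {D : Set ℝ} (hD : Convex ℝ D) {f f' : ℝ → ℝ}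
    (hf : ∀ x ∈ D, HasDerivAt f (f' x) x) (hf' : ∀ x ∈ interior D, 0 ≤ f' x) :
    MonotoneOn f D :=
  monotoneOn_of_hasDerivWithinAt_nonneg hD
    (fun x hx => (hf x hx).continuousAt.continuousWithinAt)
    (fun x hx => (hf x (interior_subset hx)).hasDerivWithinAt) hf'

lemma antitoneOn_of_forall_hasDerivAt_nonpos {D : Set ℝ} (hD : Convex ℝ D) {f f' : ℝ → ℝ}
    (hf : ∀ x ∈ D, HasDerivAt f (f' x) x) (hf' : ∀ x ∈ interior D, f' x ≤ 0) :
    AntitoneOn f D :=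
  antitoneOn_of_hasDerivWithinAt_nonpos hD
    (fun x hx => (hf x hx).continuousAt.continuousWithinAt)
    (fun x hx => (hf x (interior_subset hx)).hasDerivWithinAt) hf'

lemma nonneg_of_hasDerivAt_linear_s9 {f g h : ℝ → ℝ} {a b : ℝ} (hg : Continuous g)
    (hf : ∀ x ∈ Icc a b, HasDerivAt f (g x * f x + h x) x) (hh : ∀ x ∈ Ioo a b, 0 ≤ h x)
    (ha : 0 ≤ f a) : ∀ x ∈ Icc a b, 0 ≤ f x := by
  set G : ℝ → ℝ := fun x => ∫ s in a..x, g s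
  have hG : ∀ x, HasDerivAt G (g x) x := fun x =>
    intervalIntegral.integral_hasDerivAt_right (hg.intervalIntegrable a x)
      (hg.stronglyMeasurableAtFilter _ _) hg.continuousAt
  have hw : MonotoneOn (fun x => f x * Real.exp (-G x)) (Icc a b) := by
    refine monotoneOn_of_forall_hasDerivAt_nonneg (convex_Icc a b)
      (fun x hx => ((hf x hx).mul (hG x).neg.exp).congr_deriv
        (by simp only [Pi.neg_apply]; ring : _ = h x * Real.exp (-G x))) fun x hx => ?_
    rw [interior_Icc] at hx
    exact mul_nonneg (hh x hx) (Real.exp_pos _).le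
  intro x hx
  have hax := hw (left_mem_Icc.2 (hx.1.trans hx.2)) hx hx.1
  simp only [G, intervalIntegral.integral_same, neg_zero, Real.exp_zero, mul_one] at hax
  exact nonneg_of_mul_nonneg_left (ha.trans hax) (Real.exp_pos _)

lemma forall_Ici_of_forall_Icc_step {τ : ℝ} (hτ : 0 < τ) {P : ℝ → Prop}
    (h₀ : ∀ t ∈ Icc (-τ) 0, P t)
    (hstep : ∀ s, 0 ≤ s → (∀ t ∈ Icc (-τ) s, P t) → ∀ t ∈ Icc s (s + τ), P t) :
    ∀ t, -τ ≤ t → P t := by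
  have hn : ∀ n : ℕ, ∀ t ∈ Icc (-τ) (n * τ), P t := by
    intro n
    induction n with
    | zero => simpa using h₀
    | succ n ih =>
      intro t ⟨ht₁, ht₂⟩
      rcases le_total t (n * τ) with ht | ht
      · exact ih t ⟨ht₁, ht⟩
      · exact hstep _ (by positivity) ih t ⟨ht, by push_cast at ht₂; linarith⟩
  intro t ht
  obtain ⟨n, hn'⟩ := exists_nat_ge (t / τ)
  exact hn n t ⟨ht, (div_le_iff₀ hτ).1 hn'⟩

theorem stmt_9_general
    (K r τ : ℝ) (hK : 0 < K) (hr : 0 < r) (hτ : 0 < τ)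
    (m p q u : ℝ → ℝ)
    (hmc : Continuous m) (huc : Continuous u)
    (hdm : ∀ t : ℝ, 0 ≤ t →
      HasDerivAt m (-(r / K) * m t * u t + 2 * (r / K) * m (t - τ) * u (t - τ)) t)
    (hdp : ∀ t : ℝ, 0 ≤ t →
      HasDerivAt p ((r / K) * m t * u t - (r / K) * m (t - τ) * u (t - τ)) t)
    (hdq : ∀ t : ℝ, 0 ≤ t →
      HasDerivAt q ((r / K) * m t * u t - (r / K) * m (t - τ) * u (t - τ)) t)
    (hdu : ∀ t : ℝ, 0 ≤ t → HasDerivAt u (-(r / K) * m t * u t) t)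
    (hmnn : ∀ θ ∈ Set.Icc (-τ) (0 : ℝ), 0 ≤ m θ)
    (hunn : ∀ θ ∈ Set.Icc (-τ) (0 : ℝ), 0 ≤ u θ)
    (hsum : m 0 + p 0 + q 0 + u 0 = K)
:
    AntitoneOn u (Set.Ici (0 : ℝ)) ∧
    MonotoneOn (fun t => m t + p t + q t) (Set.Ici (0 : ℝ)) ∧
    ∀ t : ℝ, 0 ≤ t → K - u 0 ≤ m t + p t + q t := by
  have hu : ∀ t, -τ ≤ t → 0 ≤ u t := by
    intro t ht
    rcases le_total t 0 with ht₀ | ht₀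
    · exact hunn t ⟨ht, ht₀⟩
    refine nonneg_of_hasDerivAt_linear_s9 (g := fun x => -(r / K) * m x) (h := 0)
      (hmc.const_mul _) (fun x hx => (hdu x hx.1).congr_deriv (by simp))
      (fun _ _ => le_rfl) (hunn 0 ⟨by linarith, le_rfl⟩) t ⟨ht₀, le_rfl⟩
  have hm : ∀ t, -τ ≤ t → 0 ≤ m t := by
    refine forall_Ici_of_forall_Icc_step hτ hmnn fun s hs ih => ?_
    refine nonneg_of_hasDerivAt_linear_s9 (g := fun x => -(r / K) * u x)
      (h := fun x => 2 * (r / K) * m (x - τ) * u (x - τ)) (huc.const_mul _)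
      (fun x hx => (hdm x (hs.trans hx.1)).congr_deriv (by ring)) (fun x hx => ?_)
      (ih s ⟨by linarith, le_rfl⟩)
    have := ih (x - τ) ⟨by linarith [hx.1], by linarith [hx.2]⟩
    have := hu (x - τ) (by linarith [hx.1])
    positivity
  have hmu : ∀ x ∈ interior (Ici (0 : ℝ)), 0 ≤ r / K * m x * u x := by
    intro x hx
    rw [interior_Ici] at hx
    have := hm x (by linarith [hx.out])
    have := hu x (by linarith [hx.out])
    positivity
  have hmono : MonotoneOn (fun t => m t + p t + q t) (Ici 0) :=
    monotoneOn_of_forall_hasDerivAt_nonneg (convex_Ici 0)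
      (fun x hx => (((hdm x hx).add (hdp x hx)).add (hdq x hx)).congr_deriv
        (by ring : _ = r / K * m x * u x)) hmu
  refine ⟨antitoneOn_of_forall_hasDerivAt_nonpos (convex_Ici 0) hdu fun x hx => ?_, hmono,
    fun t ht => ?_⟩
  · linarith [hmu x hx]
  · have := hmono self_mem_Ici ht ht
    simp only at this
    linarith

theorem stmt_9
    (K r τ : ℝ) (hK : 0 < K) (hr : 0 < r) (hτ : 0 < τ)
    (m p q u : ℝ → ℝ)
    (hmc : Continuous m) (hpc : Continuous p) (hqc : Continuous q) (huc : Continuous u)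
    (hdm : ∀ t : ℝ, 0 ≤ t →
      HasDerivAt m (-(r / K) * m t * u t + 2 * (r / K) * m (t - τ) * u (t - τ)) t)
    (hdp : ∀ t : ℝ, 0 ≤ t →
      HasDerivAt p ((r / K) * m t * u t - (r / K) * m (t - τ) * u (t - τ)) t)
    (hdq : ∀ t : ℝ, 0 ≤ t →
      HasDerivAt q ((r / K) * m t * u t - (r / K) * m (t - τ) * u (t - τ)) t)
    (hdu : ∀ t : ℝ, 0 ≤ t → HasDerivAt u (-(r / K) * m t * u t) t)
    (hmnn : ∀ θ ∈ Set.Icc (-τ) (0 : ℝ), 0 ≤ m θ)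
    (hpnn : ∀ θ ∈ Set.Icc (-τ) (0 : ℝ), 0 ≤ p θ)
    (hqnn : ∀ θ ∈ Set.Icc (-τ) (0 : ℝ), 0 ≤ q θ)
    (hunn : ∀ θ ∈ Set.Icc (-τ) (0 : ℝ), 0 ≤ u θ)
    (hsum : m 0 + p 0 + q 0 + u 0 = K)
    (hpin : p 0 = (r / K) * ∫ s in (-τ)..(0 : ℝ), m s * u s)
    (hqin : q 0 = (r / K) * ∫ s in (-τ)..(0 : ℝ), m s * u s)
:
    AntitoneOn u (Set.Ici (0 : ℝ)) ∧
    MonotoneOn (fun t => m t + p t + q t) (Set.Ici (0 : ℝ)) ∧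
    ∀ t : ℝ, 0 ≤ t → K - u 0 ≤ m t + p t + q t :=
  stmt_9_general K r τ hK hr hτ m p q u hmc huc hdm hdp hdq hdu hmnn hunn hsum
end

section
/- (Theorem 1) Under the feasibility conditions, if m(0) > 0, then as t → ∞ one has m(t) → K, p(t) → 0, q(t) → 0 and u(t) → 0. -/
/-!
Since `u' = -(r/K) m u`, an integrating factor keeps `u` nonnegative, and once `m ≥ 0` is known
`u` is nonincreasing, so it converges to some `L ≥ 0`. An integrating factor for the `m`-equation,
applied interval by interval of length `τ` (the method of steps), keeps `m` positive. Both `p` and `q`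
equal the sliding integral `(r/K) ∫_{t-τ}^t m u = u(t-τ) - u(t)`, which tends to `0`, so
conservation of `m + p + q + u = K` gives `m → K - L > 0`. Then `u' = -(r/K) m u` tends to
`-(r/K)(K - L) L`, which must vanish since `u` converges; hence `L = 0`.
-/

open Set Filter Topology Real intervalIntegral

theorem eqOn_Ici_of_hasDerivAt {f g f' : ℝ → ℝ} {a : ℝ}
    (hf : ∀ t, a ≤ t → HasDerivAt f (f' t) t) (hg : ∀ t, a ≤ t → HasDerivAt g (f' t) t)
    (ha : f a = g a) : ∀ t, a ≤ t → f t = g t := fun t ht =>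
  eq_of_has_deriv_right_eq (fun x hx => (hf x hx.1).hasDerivWithinAt)
    (fun x hx => (hg x hx.1).hasDerivWithinAt)
    (fun x hx => (hf x hx.1).continuousAt.continuousWithinAt)
    (fun x hx => (hg x hx.1).continuousAt.continuousWithinAt) ha t ⟨ht, le_rfl⟩

theorem antitoneOn_Ici_of_hasDerivAt_nonpos {f f' : ℝ → ℝ} {a : ℝ}
    (hf : ∀ t, a ≤ t → HasDerivAt f (f' t) t) (hf' : ∀ t, a ≤ t → f' t ≤ 0) :
    AntitoneOn f (Ici a) := by
  refine antitoneOn_of_hasDerivWithinAt_nonpos (f' := f') (convex_Ici a)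
    (fun x hx => (hf x hx).continuousAt.continuousWithinAt) (fun x hx => ?_) (fun x hx => ?_)
  all_goals rw [interior_Ici] at hx
  · exact (hf x (le_of_lt hx)).hasDerivWithinAt
  · exact hf' x (le_of_lt hx)

theorem AntitoneOn.exists_tendsto_atTop {f : ℝ → ℝ} {a : ℝ} (hf : AntitoneOn f (Ici a))
    (hb : BddBelow (f '' Ici a)) : ∃ L, Tendsto f atTop (𝓝 L) ∧ ∀ t, a ≤ t → L ≤ f t := by
  set v : ℝ → ℝ := fun t => f (max t a)
  have hv : Antitone v := fun s t hst =>
    hf (le_max_right s a) (le_max_right t a) (max_le_max hst le_rfl)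
  have hvb : BddBelow (range v) :=
    hb.mono (range_subset_iff.2 fun t => mem_image_of_mem f (le_max_right t a))
  have hfv : ∀ t, a ≤ t → v t = f t := fun t ht => by simp only [v, max_eq_left ht]
  refine ⟨⨅ t, v t, (tendsto_atTop_ciInf hv hvb).congr' ?_, fun t ht => ?_⟩
  · filter_upwards [eventually_ge_atTop a] with t ht using hfv t ht
  · exact hfv t ht ▸ ciInf_le hvb t

theorem tendsto_atBot_of_hasDerivAt_le_neg {f f' : ℝ → ℝ} {ε : ℝ} (hε : 0 < ε)
    (hf : ∀ᶠ t in atTop, HasDerivAt f (f' t) t ∧ f' t ≤ -ε) : Tendsto f atTop atBot := by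
  obtain ⟨T, hT⟩ := hf.exists_forall_of_atTop
  have hanti : AntitoneOn (fun t => f t + ε * t) (Ici T) :=
    antitoneOn_Ici_of_hasDerivAt_nonpos (f' := fun t => f' t + ε)
      (fun t ht => (hT t ht).1.add ((hasDerivAt_id t).const_mul ε |>.congr_deriv (mul_one ε)))
      (fun t ht => by linarith [(hT t ht).2])
  have hlin : Tendsto (fun t => f T + ε * T + -ε * t) atTop atBot :=
    tendsto_atBot_add_const_left _ _ (tendsto_id.const_mul_atTop_of_neg (neg_neg_of_pos hε))
  refine tendsto_atBot_mono' atTop ?_ hlin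
  filter_upwards [eventually_ge_atTop T] with t ht
  linarith [hanti self_mem_Ici ht ht]

theorem eq_zero_of_tendsto_of_hasDerivAt {f f' : ℝ → ℝ} {l L : ℝ}
    (hf : ∀ᶠ t in atTop, HasDerivAt f (f' t) t) (hf' : Tendsto f' atTop (𝓝 l))
    (hL : Tendsto f atTop (𝓝 L)) : l = 0 := by
  rcases lt_trichotomy l 0 with hl | hl | hl
  · refine absurd (tendsto_atBot_of_hasDerivAt_le_neg (f' := f') (half_pos (neg_pos.2 hl)) ?_)
      (not_tendsto_atBot_of_tendsto_nhds hL)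
    filter_upwards [hf, hf'.eventually (eventually_le_nhds (by linarith : l < l / 2))]
      with t h1 h2 using ⟨h1, by linarith⟩
  · exact hl
  · refine absurd (tendsto_atBot_of_hasDerivAt_le_neg (f' := -f') (half_pos hl) ?_)
      (not_tendsto_atBot_of_tendsto_nhds hL.neg)
    filter_upwards [hf, hf'.eventually (eventually_ge_nhds (by linarith : l / 2 < l))]
      with t h1 h2 using ⟨h1.neg, by simp only [Pi.neg_apply]; linarith⟩

theorem le_mul_exp_integral_of_hasDerivAt {f k h : ℝ → ℝ} {a b : ℝ} (hk : Continuous k)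
    (hab : a ≤ b) (hf : ∀ t ∈ Icc a b, HasDerivAt f (-k t * f t + h t) t)
    (hh : ∀ t ∈ Icc a b, 0 ≤ h t) : f a ≤ f b * exp (∫ s in a..b, k s) := by
  have hg : ∀ t ∈ Icc a b, HasDerivAt (fun s => f s * exp (∫ x in a..s, k x))
      (h t * exp (∫ x in a..t, k x)) t := fun t ht =>
    ((hf t ht).mul (hk.integral_hasStrictDerivAt a t).hasDerivAt.exp).congr_deriv (by ring)
  have hmono := monotoneOn_of_hasDerivWithinAt_nonneg (convex_Icc a b)
    (fun t ht => (hg t ht).continuousAt.continuousWithinAt)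
    (fun t ht => (hg t (interior_subset ht)).hasDerivWithinAt)
    (fun t ht => mul_nonneg (hh t (interior_subset ht)) (exp_pos _).le)
  simpa using hmono (left_mem_Icc.2 hab) (right_mem_Icc.2 hab) hab

theorem forall_of_method_of_steps {P : ℝ → Prop} {τ : ℝ} (hτ : 0 < τ)
    (hinit : ∀ t ∈ Icc (-τ) 0, P t) (hstep : ∀ t, 0 < t → (∀ s ∈ Icc (-τ) (t - τ), P s) → P t) :
    ∀ t, -τ ≤ t → P t := by
  have hn : ∀ n : ℕ, ∀ t ∈ Icc (-τ) (n * τ), P t := by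
    intro n
    induction n with
    | zero => simpa using hinit
    | succ n ih =>
      intro t ht
      rcases le_or_gt t 0 with h | h
      · exact hinit t ⟨ht.1, h⟩
      · refine hstep t h fun s hs => ih s ⟨hs.1, ?_⟩
        have := ht.2
        push_cast at this
        linarith [hs.2]
  intro t ht
  obtain ⟨n, hn'⟩ := exists_nat_ge (t / τ)
  exact hn n t ⟨ht, (div_le_iff₀ hτ).1 hn'⟩

theorem eq_integral_window_of_hasDerivAt {f g : ℝ → ℝ} {τ : ℝ} (hg : Continuous g)
    (hf : ∀ t, 0 ≤ t → HasDerivAt f (g t - g (t - τ)) t) (h0 : f 0 = ∫ s in -τ..0, g s) :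
    ∀ t, 0 ≤ t → f t = ∫ s in t - τ..t, g s := by
  have hG : ∀ t, HasDerivAt (fun t => ∫ s in (0 : ℝ)..t, g s) (g t) t := fun t =>
    (hg.integral_hasStrictDerivAt 0 t).hasDerivAt
  have hF := eqOn_Ici_of_hasDerivAt hf
    (fun t _ => (hG t).sub ((hG (t - τ)).comp_sub_const t τ))
    (h0.trans (by simp [integral_symm (-τ) 0]))
  intro t ht
  exact (hF t ht).trans
    (integral_interval_sub_left (hg.intervalIntegrable _ _) (hg.intervalIntegrable _ _))

theorem tendsto_integral_window_of_hasDerivAt {u a : ℝ → ℝ} {τ L : ℝ} (ha : Continuous a)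
    (hu : ∀ t, 0 ≤ t → HasDerivAt u (-a t) t) (huL : Tendsto u atTop (𝓝 L)) :
    Tendsto (fun t => ∫ s in t - τ..t, a s) atTop (𝓝 0) := by
  have hshift : Tendsto (fun t => u (t - τ)) atTop (𝓝 L) :=
    huL.comp (tendsto_atTop_add_const_right atTop (-τ) tendsto_id)
  refine (sub_self L ▸ hshift.sub huL).congr' ?_
  filter_upwards [eventually_ge_atTop (max τ 0)] with t ht
  obtain ⟨hτt, ht0⟩ := max_le_iff.1 ht
  have hFTC : ∫ s in t - τ..t, a s = -u t - -u (t - τ) :=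
    integral_eq_sub_of_hasDerivAt
      (fun x hx => (hu x ((le_inf (by linarith) ht0).trans hx.1)).neg.congr_deriv (neg_neg _))
      (ha.intervalIntegrable _ _)
  rw [hFTC]
  ring

theorem tendsto_zero_of_hasDerivAt_sub_delay {f a u : ℝ → ℝ} {τ L : ℝ} (ha : Continuous a)
    (hf : ∀ t, 0 ≤ t → HasDerivAt f (a t - a (t - τ)) t) (h0 : f 0 = ∫ s in -τ..0, a s)
    (hu : ∀ t, 0 ≤ t → HasDerivAt u (-a t) t) (huL : Tendsto u atTop (𝓝 L)) :
    Tendsto f atTop (𝓝 0) :=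
  (tendsto_integral_window_of_hasDerivAt ha hu huL).congr' <|
    eventually_ge_atTop 0 |>.mono fun t ht => (eq_integral_window_of_hasDerivAt ha hf h0 t ht).symm

theorem eq_zero_of_hasDerivAt_eq_neg_mul {c M L : ℝ} {m u : ℝ → ℝ} (hc : c ≠ 0) (hM : M ≠ 0)
    (hdu : ∀ t, 0 ≤ t → HasDerivAt u (-c * m t * u t) t) (hm : Tendsto m atTop (𝓝 M))
    (hu : Tendsto u atTop (𝓝 L)) : L = 0 :=
  (mul_eq_zero.1 <| eq_zero_of_tendsto_of_hasDerivAt (eventually_ge_atTop 0 |>.mono hdu)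
    ((tendsto_const_nhds.mul hm).mul hu) hu).resolve_left (mul_ne_zero (neg_ne_zero.2 hc) hM)

theorem nonneg_of_hasDerivAt_eq_neg_mul {k u : ℝ → ℝ} {τ : ℝ} (hk : Continuous k) (hτ : 0 ≤ τ)
    (hdu : ∀ t, 0 ≤ t → HasDerivAt u (-k t * u t) t) (hu : ∀ θ ∈ Icc (-τ) 0, 0 ≤ u θ) :
    ∀ t, -τ ≤ t → 0 ≤ u t := by
  intro t ht
  rcases le_or_gt t 0 with h | h
  · exact hu t ⟨ht, h⟩
  · have := le_mul_exp_integral_of_hasDerivAt (h := 0) hk h.le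
      (fun s hs => (hdu s hs.1).congr_deriv (by simp)) (fun _ _ => le_rfl)
    exact (mul_nonneg_iff_of_pos_right (exp_pos _)).1 ((hu 0 ⟨by linarith, le_rfl⟩).trans this)

section DelayedBirth

variable {c τ : ℝ} {m u : ℝ → ℝ}

theorem delayedBirth_zero_le_mul_exp (hc : 0 ≤ c) (huc : Continuous u)
    (hdm : ∀ t, 0 ≤ t → HasDerivAt m (-c * m t * u t + 2 * c * m (t - τ) * u (t - τ)) t)
    {t : ℝ} (ht : 0 ≤ t) (hpast : ∀ s ∈ Icc (-τ) (t - τ), 0 ≤ m s * u s) :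
    m 0 ≤ m t * exp (∫ s in 0..t, c * u s) :=
  le_mul_exp_integral_of_hasDerivAt (h := fun s => 2 * c * (m (s - τ) * u (s - τ)))
    (continuous_const.mul huc) ht (fun s hs => (hdm s hs.1).congr_deriv (by ring))
    (fun s hs => mul_nonneg (by positivity) (hpast _ ⟨by linarith [hs.1], by linarith [hs.2]⟩))

theorem delayedBirth_nonneg (hc : 0 ≤ c) (hτ : 0 < τ) (huc : Continuous u)
    (hdm : ∀ t, 0 ≤ t → HasDerivAt m (-c * m t * u t + 2 * c * m (t - τ) * u (t - τ)) t)
    (hm : ∀ θ ∈ Icc (-τ) 0, 0 ≤ m θ) (hu : ∀ t, -τ ≤ t → 0 ≤ u t) :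
    ∀ t, -τ ≤ t → 0 ≤ m t :=
  forall_of_method_of_steps hτ hm fun t ht hpast =>
    (mul_nonneg_iff_of_pos_right (exp_pos _)).1 <| (hm 0 ⟨by linarith, le_rfl⟩).trans <|
      delayedBirth_zero_le_mul_exp hc huc hdm ht.le fun s hs => mul_nonneg (hpast s hs) (hu s hs.1)

theorem delayedBirth_pos (hc : 0 ≤ c) (huc : Continuous u)
    (hdm : ∀ t, 0 ≤ t → HasDerivAt m (-c * m t * u t + 2 * c * m (t - τ) * u (t - τ)) t)
    (hm : ∀ t, -τ ≤ t → 0 ≤ m t) (hu : ∀ t, -τ ≤ t → 0 ≤ u t) (hm0 : 0 < m 0) :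
    ∀ t, 0 ≤ t → 0 < m t := fun _ ht =>
  (mul_pos_iff_of_pos_right (exp_pos _)).1 <| hm0.trans_le <|
    delayedBirth_zero_le_mul_exp hc huc hdm ht fun s hs => mul_nonneg (hm s hs.1) (hu s hs.1)

end DelayedBirth

theorem stmt_12_general
    (K r τ : ℝ) (hK : 0 < K) (hr : 0 < r) (hτ : 0 < τ)
    (m p q u : ℝ → ℝ)
    (hmc : Continuous m) (huc : Continuous u)
    (hdm : ∀ t : ℝ, 0 ≤ t →
      HasDerivAt m (-(r / K) * m t * u t + 2 * (r / K) * m (t - τ) * u (t - τ)) t)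
    (hdp : ∀ t : ℝ, 0 ≤ t →
      HasDerivAt p ((r / K) * m t * u t - (r / K) * m (t - τ) * u (t - τ)) t)
    (hdq : ∀ t : ℝ, 0 ≤ t →
      HasDerivAt q ((r / K) * m t * u t - (r / K) * m (t - τ) * u (t - τ)) t)
    (hdu : ∀ t : ℝ, 0 ≤ t → HasDerivAt u (-(r / K) * m t * u t) t)
    (hmnn : ∀ θ ∈ Set.Icc (-τ) (0 : ℝ), 0 ≤ m θ)
    (hpnn : ∀ θ ∈ Set.Icc (-τ) (0 : ℝ), 0 ≤ p θ)
    (hunn : ∀ θ ∈ Set.Icc (-τ) (0 : ℝ), 0 ≤ u θ)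
    (hsum : m 0 + p 0 + q 0 + u 0 = K)
    (hpin : p 0 = (r / K) * ∫ s in (-τ)..(0 : ℝ), m s * u s)
    (hqin : q 0 = (r / K) * ∫ s in (-τ)..(0 : ℝ), m s * u s)
    (hmpos : 0 < m 0)
:
    Filter.Tendsto m Filter.atTop (nhds K) ∧ Filter.Tendsto p Filter.atTop (nhds 0) ∧
    Filter.Tendsto q Filter.atTop (nhds 0) ∧ Filter.Tendsto u Filter.atTop (nhds 0) := by
  have hc : 0 < r / K := div_pos hr hK
  have ha : Continuous fun t => r / K * m t * u t := by fun_prop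
  have hda : ∀ t, 0 ≤ t → HasDerivAt u (-(r / K * m t * u t)) t := fun t ht =>
    (hdu t ht).congr_deriv (by ring)
  have hu := nonneg_of_hasDerivAt_eq_neg_mul (k := fun t => r / K * m t) (by fun_prop) hτ.le
    (fun t ht => (hdu t ht).congr_deriv (by ring)) hunn
  have hm := delayedBirth_nonneg hc.le hτ huc hdm hmnn hu
  have hm' := delayedBirth_pos hc.le huc hdm hm hu hmpos
  obtain ⟨L, huL, hLu⟩ := (antitoneOn_Ici_of_hasDerivAt_nonpos hda fun t ht =>
      neg_nonpos.2 (mul_nonneg (mul_nonneg hc.le (hm' t ht).le) (hu t (by linarith))))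
    |>.exists_tendsto_atTop ⟨0, by rintro _ ⟨t, ht, rfl⟩; exact hu t (by linarith [ht.out])⟩
  have h0 : p 0 = ∫ s in -τ..0, r / K * m s * u s := by
    simp only [hpin, mul_assoc, integral_const_mul]
  have hpL := tendsto_zero_of_hasDerivAt_sub_delay ha hdp h0 hda huL
  have hqL := tendsto_zero_of_hasDerivAt_sub_delay ha hdq (hqin.trans (hpin.symm.trans h0)) hda huL
  have hK' : ∀ t, 0 ≤ t → m t + p t + q t + u t = K := eqOn_Ici_of_hasDerivAt (f' := fun _ => 0)
    (fun t ht => ((((hdm t ht).add (hdp t ht)).add (hdq t ht)).add (hdu t ht)).congr_deriv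
      (by ring)) (fun t _ => hasDerivAt_const t K) hsum
  have hmL : Tendsto m atTop (𝓝 (K - L)) := by
    refine (sub_zero K ▸ sub_zero K ▸ ((tendsto_const_nhds.sub hpL).sub hqL).sub huL).congr' ?_
    filter_upwards [eventually_ge_atTop 0] with t ht
    linarith [hK' t ht]
  have hLK : L < K := by linarith [hLu 0 le_rfl, hpnn 0 ⟨by linarith, le_rfl⟩]
  obtain rfl : L = 0 := eq_zero_of_hasDerivAt_eq_neg_mul hc.ne' (sub_ne_zero.2 hLK.ne') hdu hmL huL
  exact ⟨sub_zero K ▸ hmL, hpL, hqL, huL⟩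

theorem stmt_12
    (K r τ : ℝ) (hK : 0 < K) (hr : 0 < r) (hτ : 0 < τ)
    (m p q u : ℝ → ℝ)
    (hmc : Continuous m) (hpc : Continuous p) (hqc : Continuous q) (huc : Continuous u)
    (hdm : ∀ t : ℝ, 0 ≤ t →
      HasDerivAt m (-(r / K) * m t * u t + 2 * (r / K) * m (t - τ) * u (t - τ)) t)
    (hdp : ∀ t : ℝ, 0 ≤ t →
      HasDerivAt p ((r / K) * m t * u t - (r / K) * m (t - τ) * u (t - τ)) t)
    (hdq : ∀ t : ℝ, 0 ≤ t →
      HasDerivAt q ((r / K) * m t * u t - (r / K) * m (t - τ) * u (t - τ)) t)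
    (hdu : ∀ t : ℝ, 0 ≤ t → HasDerivAt u (-(r / K) * m t * u t) t)
    (hmnn : ∀ θ ∈ Set.Icc (-τ) (0 : ℝ), 0 ≤ m θ)
    (hpnn : ∀ θ ∈ Set.Icc (-τ) (0 : ℝ), 0 ≤ p θ)
    (hqnn : ∀ θ ∈ Set.Icc (-τ) (0 : ℝ), 0 ≤ q θ)
    (hunn : ∀ θ ∈ Set.Icc (-τ) (0 : ℝ), 0 ≤ u θ)
    (hsum : m 0 + p 0 + q 0 + u 0 = K)
    (hpin : p 0 = (r / K) * ∫ s in (-τ)..(0 : ℝ), m s * u s)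
    (hqin : q 0 = (r / K) * ∫ s in (-τ)..(0 : ℝ), m s * u s)
    (hmpos : 0 < m 0)
:
    Filter.Tendsto m Filter.atTop (nhds K) ∧ Filter.Tendsto p Filter.atTop (nhds 0) ∧
    Filter.Tendsto q Filter.atTop (nhds 0) ∧ Filter.Tendsto u Filter.atTop (nhds 0) :=
  stmt_12_general K r τ hK hr hτ m p q u hmc huc hdm hdp hdq hdu hmnn hpnn hunn hsum hpin hqin hmpos
end

section
/- Reduction of Theorem 1 from the key step: under the feasibility conditions, if u(t) → 0 as t → ∞ and m(t)u(t) → 0 as t → ∞, then m(t) → K, p(t) → 0 and q(t) → 0 as t → ∞. -/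
/-!
For `t ≥ 0`, `p(t)` and `(r/K) ∫_{t-τ}^t m u` have the same derivative and agree at `t = 0`, so
they coincide; the same holds for `q`. An integral over a window of fixed length of a function
tending to `0` tends to `0`, hence `p, q → 0`. Finally `m + p + q + u` has derivative `0`, so it
stays equal to `K`, and `m = K - p - q - u → K`.
-/

open Filter Topology

theorem eq_of_hasDerivAt_eq_of_le {f g f' : ℝ → ℝ} {a : ℝ}
    (hf : ∀ t, a ≤ t → HasDerivAt f (f' t) t) (hg : ∀ t, a ≤ t → HasDerivAt g (f' t) t)
    (ha : f a = g a) {t : ℝ} (ht : a ≤ t) : f t = g t :=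
  eq_of_has_deriv_right_eq (fun x hx => (hf x hx.1).hasDerivWithinAt)
    (fun x hx => (hg x hx.1).hasDerivWithinAt)
    (fun x hx => (hf x hx.1).continuousAt.continuousWithinAt)
    (fun x hx => (hg x hx.1).continuousAt.continuousWithinAt) ha t ⟨ht, le_rfl⟩

theorem hasDerivAt_windowIntegral {g : ℝ → ℝ} (hg : Continuous g) (τ t : ℝ) :
    HasDerivAt (fun x => ∫ s in (x - τ)..x, g s) (g t - g (t - τ)) t := by
  have hwindow : (fun x => ∫ s in (x - τ)..x, g s) =
      fun x => (∫ s in (0 : ℝ)..x, g s) - ∫ s in (0 : ℝ)..(x - τ), g s := by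
    ext x
    exact (intervalIntegral.integral_interval_sub_left (hg.intervalIntegrable _ _)
      (hg.intervalIntegrable _ _)).symm
  rw [hwindow]
  exact (hg.integral_hasStrictDerivAt 0 t).hasDerivAt.sub
    ((hg.integral_hasStrictDerivAt 0 (t - τ)).hasDerivAt.comp_sub_const t τ)

theorem tendsto_windowIntegral_zero {g : ℝ → ℝ} (τ : ℝ) (hg : Tendsto g atTop (𝓝 0)) :
    Tendsto (fun t => ∫ s in (t - τ)..t, g s) atTop (𝓝 0) := by
  rw [Metric.tendsto_atTop] at hg ⊢
  intro ε hε
  obtain ⟨N, hN⟩ := hg (ε / (|τ| + 1)) (by positivity)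
  refine ⟨N + |τ|, fun t ht => ?_⟩
  have hsmall : ∀ x ∈ Set.uIoc (t - τ) t, ‖g x‖ ≤ ε / (|τ| + 1) := by
    intro x hx
    have hxN : N ≤ x := by
      have := Set.uIoc_subset_uIcc hx
      rw [Set.mem_uIcc] at this
      rcases this with h | h <;> cases abs_cases τ <;> linarith
    simpa [Real.dist_eq] using (hN x hxN).le
  calc dist (∫ s in (t - τ)..t, g s) 0
      = ‖∫ s in (t - τ)..t, g s‖ := dist_zero_right _
    _ ≤ ε / (|τ| + 1) * |t - (t - τ)| :=
        intervalIntegral.norm_integral_le_of_norm_le_const hsmall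
    _ = ε * (|τ| / (|τ| + 1)) := by rw [sub_sub_cancel]; ring
    _ < ε * 1 := by gcongr; rw [div_lt_one (by positivity)]; linarith
    _ = ε := mul_one ε

theorem eq_const_mul_windowIntegral {c τ : ℝ} {f g : ℝ → ℝ} (hg : Continuous g)
    (hf : ∀ t, 0 ≤ t → HasDerivAt f (c * g t - c * g (t - τ)) t)
    (h0 : f 0 = c * ∫ s in (-τ)..0, g s) {t : ℝ} (ht : 0 ≤ t) :
    f t = c * ∫ s in (t - τ)..t, g s := by
  refine eq_of_hasDerivAt_eq_of_le (g := fun x => c * ∫ s in (x - τ)..x, g s) hf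
    (fun x _ => ?_) (by rw [h0, zero_sub]) ht
  exact ((hasDerivAt_windowIntegral hg τ x).const_mul c).congr_deriv (mul_sub c _ _)

theorem stmt_14_general
    (K r τ : ℝ)
    (m p q u : ℝ → ℝ)
    (hmc : Continuous m) (huc : Continuous u)
    (hdm : ∀ t : ℝ, 0 ≤ t →
      HasDerivAt m (-(r / K) * m t * u t + 2 * (r / K) * m (t - τ) * u (t - τ)) t)
    (hdp : ∀ t : ℝ, 0 ≤ t →
      HasDerivAt p ((r / K) * m t * u t - (r / K) * m (t - τ) * u (t - τ)) t)
    (hdq : ∀ t : ℝ, 0 ≤ t →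
      HasDerivAt q ((r / K) * m t * u t - (r / K) * m (t - τ) * u (t - τ)) t)
    (hdu : ∀ t : ℝ, 0 ≤ t → HasDerivAt u (-(r / K) * m t * u t) t)
    (hsum : m 0 + p 0 + q 0 + u 0 = K)
    (hpin : p 0 = (r / K) * ∫ s in (-τ)..(0 : ℝ), m s * u s)
    (hqin : q 0 = (r / K) * ∫ s in (-τ)..(0 : ℝ), m s * u s)
    (hulim : Filter.Tendsto u Filter.atTop (nhds 0))
    (hmulim : Filter.Tendsto (fun t => m t * u t) Filter.atTop (nhds 0))
:
    Filter.Tendsto m Filter.atTop (nhds K) ∧ Filter.Tendsto p Filter.atTop (nhds 0) ∧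
    Filter.Tendsto q Filter.atTop (nhds 0) := by
  have hmu : Continuous fun s => m s * u s := hmc.mul huc
  have hwindow : Tendsto (fun t => r / K * ∫ s in (t - τ)..t, m s * u s) atTop (𝓝 0) := by
    simpa using (tendsto_windowIntegral_zero τ hmulim).const_mul (r / K)
  have hp : Tendsto p atTop (𝓝 0) := hwindow.congr' <| (eventually_ge_atTop 0).mono fun t ht =>
    (eq_const_mul_windowIntegral hmu (fun x hx => (hdp x hx).congr_deriv (by ring)) hpin ht).symm
  have hq : Tendsto q atTop (𝓝 0) := hwindow.congr' <| (eventually_ge_atTop 0).mono fun t ht =>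
    (eq_const_mul_windowIntegral hmu (fun x hx => (hdq x hx).congr_deriv (by ring)) hqin ht).symm
  have hconserved : ∀ t, 0 ≤ t → m t + p t + q t + u t = K := fun t ht =>
    eq_of_hasDerivAt_eq_of_le (f' := fun _ => 0) (g := fun _ => K)
      (fun x hx => ((((hdm x hx).add (hdp x hx)).add (hdq x hx)).add (hdu x hx)).congr_deriv
        (by ring))
      (fun x _ => hasDerivAt_const x K) hsum ht
  have hm : Tendsto (fun t => K - p t - q t - u t) atTop (𝓝 K) := by
    simpa using ((tendsto_const_nhds (x := K)).sub hp).sub hq |>.sub hulim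
  refine ⟨hm.congr' <| (eventually_ge_atTop 0).mono fun t ht => ?_, hp, hq⟩
  linarith [hconserved t ht]

theorem stmt_14
    (K r τ : ℝ) (hK : 0 < K) (hr : 0 < r) (hτ : 0 < τ)
    (m p q u : ℝ → ℝ)
    (hmc : Continuous m) (hpc : Continuous p) (hqc : Continuous q) (huc : Continuous u)
    (hdm : ∀ t : ℝ, 0 ≤ t →
      HasDerivAt m (-(r / K) * m t * u t + 2 * (r / K) * m (t - τ) * u (t - τ)) t)
    (hdp : ∀ t : ℝ, 0 ≤ t →
      HasDerivAt p ((r / K) * m t * u t - (r / K) * m (t - τ) * u (t - τ)) t)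
    (hdq : ∀ t : ℝ, 0 ≤ t →
      HasDerivAt q ((r / K) * m t * u t - (r / K) * m (t - τ) * u (t - τ)) t)
    (hdu : ∀ t : ℝ, 0 ≤ t → HasDerivAt u (-(r / K) * m t * u t) t)
    (hmnn : ∀ θ ∈ Set.Icc (-τ) (0 : ℝ), 0 ≤ m θ)
    (hpnn : ∀ θ ∈ Set.Icc (-τ) (0 : ℝ), 0 ≤ p θ)
    (hqnn : ∀ θ ∈ Set.Icc (-τ) (0 : ℝ), 0 ≤ q θ)
    (hunn : ∀ θ ∈ Set.Icc (-τ) (0 : ℝ), 0 ≤ u θ)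
    (hsum : m 0 + p 0 + q 0 + u 0 = K)
    (hpin : p 0 = (r / K) * ∫ s in (-τ)..(0 : ℝ), m s * u s)
    (hqin : q 0 = (r / K) * ∫ s in (-τ)..(0 : ℝ), m s * u s)
    (hulim : Filter.Tendsto u Filter.atTop (nhds 0))
    (hmulim : Filter.Tendsto (fun t => m t * u t) Filter.atTop (nhds 0))
:
    Filter.Tendsto m Filter.atTop (nhds K) ∧ Filter.Tendsto p Filter.atTop (nhds 0) ∧
    Filter.Tendsto q Filter.atTop (nhds 0) :=
  stmt_14_general K r τ m p q u hmc huc hdm hdp hdq hdu hsum hpin hqin hulim hmulim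
end

section
/- Characterization of feasible equilibria: suppose m, p, q, u are constant functions satisfying the delay differential system and the feasibility conditions. Then either (m, p, q, u) ≡ (K, 0, 0, 0) or (m, p, q, u) ≡ (0, 0, 0, K). -/
/-!
At a constant solution every derivative vanishes, so `u' = -(r/K) m u = 0` forces `m u = 0`.
Then the history integral `∫ m u` vanishes, so `p = q = 0`, and the mass constraint becomes
`m + u = K` with `m u = 0`.
-/

theorem HasDerivAt.eq_zero_of_forall_eq {𝕜 F : Type*} [NontriviallyNormedField 𝕜]
    [NormedAddCommGroup F] [NormedSpace 𝕜 F] {f : 𝕜 → F} {f' c : F} {x : 𝕜}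
    (hf : ∀ t, f t = c) (h : HasDerivAt f f' x) : f' = 0 := by
  rw [funext hf] at h
  exact h.unique (hasDerivAt_const x c)

theorem eq_and_eq_zero_or_of_add_eq_of_mul_eq_zero {R : Type*} [Ring R] [NoZeroDivisors R]
    {a b k : R} (hsum : a + b = k) (hmul : a * b = 0) :
    (a = k ∧ b = 0) ∨ (a = 0 ∧ b = k) := by
  rcases mul_eq_zero.1 hmul with ha | hb
  · right; exact ⟨ha, by rw [← hsum, ha, zero_add]⟩
  · left; exact ⟨by rw [← hsum, hb, add_zero], hb⟩

theorem stmt_16_general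
    (K r τ : ℝ) (hK : 0 < K) (hr : 0 < r)
    (m p q u : ℝ → ℝ)
    (hdu : ∀ t : ℝ, 0 ≤ t → HasDerivAt u (-(r / K) * m t * u t) t)
    (hsum : m 0 + p 0 + q 0 + u 0 = K)
    (hpin : p 0 = (r / K) * ∫ s in (-τ)..(0 : ℝ), m s * u s)
    (hqin : q 0 = (r / K) * ∫ s in (-τ)..(0 : ℝ), m s * u s)
    (hmconst : ∀ t : ℝ, m t = m 0) (hpconst : ∀ t : ℝ, p t = p 0)
    (hqconst : ∀ t : ℝ, q t = q 0) (huconst : ∀ t : ℝ, u t = u 0)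
:
    (∀ t : ℝ, m t = K ∧ p t = 0 ∧ q t = 0 ∧ u t = 0) ∨
    (∀ t : ℝ, m t = 0 ∧ p t = 0 ∧ q t = 0 ∧ u t = K) := by
  have hmu : m 0 * u 0 = 0 := by
    have h := (hdu 0 le_rfl).eq_zero_of_forall_eq huconst
    have hrK : r / K ≠ 0 := by positivity
    rw [mul_assoc, neg_mul, neg_eq_zero] at h
    exact (mul_eq_zero.1 h).resolve_left hrK
  have hint : ∫ s in (-τ)..(0 : ℝ), m s * u s = 0 := by
    simp only [hmconst, huconst, hmu, intervalIntegral.integral_zero]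
  have hp0 : p 0 = 0 := by rw [hpin, hint, mul_zero]
  have hq0 : q 0 = 0 := by rw [hqin, hint, mul_zero]
  rw [hp0, hq0, add_zero, add_zero] at hsum
  rcases eq_and_eq_zero_or_of_add_eq_of_mul_eq_zero hsum hmu with ⟨hm, hu⟩ | ⟨hm, hu⟩
  · left; intro t
    rw [hmconst t, hpconst t, hqconst t, huconst t]
    exact ⟨hm, hp0, hq0, hu⟩
  · right; intro t
    rw [hmconst t, hpconst t, hqconst t, huconst t]
    exact ⟨hm, hp0, hq0, hu⟩

theorem stmt_16
    (K r τ : ℝ) (hK : 0 < K) (hr : 0 < r) (hτ : 0 < τ)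
    (m p q u : ℝ → ℝ)
    (hmc : Continuous m) (hpc : Continuous p) (hqc : Continuous q) (huc : Continuous u)
    (hdm : ∀ t : ℝ, 0 ≤ t →
      HasDerivAt m (-(r / K) * m t * u t + 2 * (r / K) * m (t - τ) * u (t - τ)) t)
    (hdp : ∀ t : ℝ, 0 ≤ t →
      HasDerivAt p ((r / K) * m t * u t - (r / K) * m (t - τ) * u (t - τ)) t)
    (hdq : ∀ t : ℝ, 0 ≤ t →
      HasDerivAt q ((r / K) * m t * u t - (r / K) * m (t - τ) * u (t - τ)) t)
    (hdu : ∀ t : ℝ, 0 ≤ t → HasDerivAt u (-(r / K) * m t * u t) t)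
    (hmnn : ∀ θ ∈ Set.Icc (-τ) (0 : ℝ), 0 ≤ m θ)
    (hpnn : ∀ θ ∈ Set.Icc (-τ) (0 : ℝ), 0 ≤ p θ)
    (hqnn : ∀ θ ∈ Set.Icc (-τ) (0 : ℝ), 0 ≤ q θ)
    (hunn : ∀ θ ∈ Set.Icc (-τ) (0 : ℝ), 0 ≤ u θ)
    (hsum : m 0 + p 0 + q 0 + u 0 = K)
    (hpin : p 0 = (r / K) * ∫ s in (-τ)..(0 : ℝ), m s * u s)
    (hqin : q 0 = (r / K) * ∫ s in (-τ)..(0 : ℝ), m s * u s)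
    (hmconst : ∀ t : ℝ, m t = m 0) (hpconst : ∀ t : ℝ, p t = p 0)
    (hqconst : ∀ t : ℝ, q t = q 0) (huconst : ∀ t : ℝ, u t = u 0)
:
    (∀ t : ℝ, m t = K ∧ p t = 0 ∧ q t = 0 ∧ u t = 0) ∨
    (∀ t : ℝ, m t = 0 ∧ p t = 0 ∧ q t = 0 ∧ u t = K) :=
  stmt_16_general K r τ hK hr m p q u hdu hsum hpin hqin hmconst hpconst hqconst huconst
end

section
/- Convergence of the empty-site count: under the feasibility conditions, u(t) converges to a limit L ∈ [0, u(0)] as t → ∞, and the integral ∫_{0}^{∞} m(s)u(s) ds is finite. -/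
/-!
Along the solution, `u' = -(r/K) m u`, so `u` is non-negative by the integrating factor
`exp ((r/K) ∫ m)`. The `m` equation becomes `(m · exp ((r/K) ∫ u))' = exp (…) · 2(r/K) m(t-τ) u(t-τ)`,
whose right side is non-negative on `[0, (n+1)τ]` once `m ≥ 0` on `[-τ, nτ]`; stepping through
the delay gives `m ≥ 0`. Hence `u` is non-increasing and non-negative, so it converges, and
`(r/K) m u = -u'` is integrable on `[0, ∞)` because it has a sign and `u` has a limit.
-/

open Set Filter MeasureTheory Real Topology

theorem hasDerivAt_mul_exp_integral {f g : ℝ → ℝ} {f' a t : ℝ} (hg : Continuous g)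
    (hf : HasDerivAt f f' t) :
    HasDerivAt (fun x => f x * exp (∫ s in a..x, g s))
      ((f' + g t * f t) * exp (∫ s in a..t, g s)) t := by
  have hexp := (hg.integral_hasStrictDerivAt a t).hasDerivAt.exp
  exact (hf.mul hexp).congr_deriv (by ring)

theorem nonneg_of_hasDerivAt_linear_of_forcing_nonneg {f g h : ℝ → ℝ} {a b : ℝ}
    (hg : Continuous g) (hfc : ContinuousOn f (Icc a b))
    (hf : ∀ x ∈ Ioo a b, HasDerivAt f (-g x * f x + h x) x) (hh : ∀ x ∈ Ioo a b, 0 ≤ h x)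
    (ha : 0 ≤ f a) : ∀ t ∈ Icc a b, 0 ≤ f t := by
  intro t ht
  have hmono : MonotoneOn (fun x => f x * exp (∫ s in a..x, g s)) (Icc a b) := by
    have hprim : Continuous fun x => ∫ s in a..x, g s :=
      intervalIntegral.continuous_primitive (fun _ _ => hg.intervalIntegrable _ _) a
    refine monotoneOn_of_hasDerivWithinAt_nonneg (f' := fun x => h x * exp (∫ s in a..x, g s))
      (convex_Icc a b) (hfc.mul hprim.rexp.continuousOn) (fun x hx => ?_) (fun x hx => ?_)
    · rw [interior_Icc] at hx
      exact ((hasDerivAt_mul_exp_integral hg (hf x hx)).congr_deriv (by ring)).hasDerivWithinAt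
    · rw [interior_Icc] at hx
      exact mul_nonneg (hh x hx) (exp_pos _).le
  have hat := hmono (left_mem_Icc.2 (ht.1.trans ht.2)) ht ht.1
  simp only [intervalIntegral.integral_same, exp_zero, mul_one] at hat
  exact nonneg_of_mul_nonneg_left (ha.trans hat) (exp_pos _)

theorem nonneg_of_hasDerivAt_neg_mul {c : ℝ} {m u : ℝ → ℝ} (hmc : Continuous m)
    (huc : Continuous u) (hdu : ∀ t : ℝ, 0 ≤ t → HasDerivAt u (-c * m t * u t) t)
    (hu₀ : 0 ≤ u 0) (t : ℝ) (ht : 0 ≤ t) : 0 ≤ u t :=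
  nonneg_of_hasDerivAt_linear_of_forcing_nonneg (g := fun x => c * m x) (h := 0) (b := t)
    (hmc.const_mul c) huc.continuousOn
    (fun x hx => (hdu x hx.1.le).congr_deriv (by simp only [Pi.zero_apply]; ring))
    (fun _ _ => le_rfl) hu₀ t ⟨ht, le_rfl⟩

theorem nonneg_of_hasDerivAt_delay_s19 {b c τ : ℝ} {m u : ℝ → ℝ} (hτ : 0 < τ) (hb : 0 ≤ b)
    (hmc : Continuous m) (huc : Continuous u)
    (hdm : ∀ t : ℝ, 0 ≤ t →
      HasDerivAt m (-c * m t * u t + b * m (t - τ) * u (t - τ)) t)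
    (hm : ∀ θ ∈ Icc (-τ) 0, 0 ≤ m θ) (hu : ∀ t : ℝ, -τ ≤ t → 0 ≤ u t) (t : ℝ) (ht : -τ ≤ t) :
    0 ≤ m t := by
  have hstep : ∀ n : ℕ, ∀ t ∈ Icc (-τ) (n * τ), 0 ≤ m t := by
    intro n
    induction n with
    | zero => simpa using hm
    | succ n ih =>
      rintro t ⟨ht₁, ht₂⟩
      rcases le_or_gt t 0 with ht₀ | ht₀
      · exact hm t ⟨ht₁, ht₀⟩
      refine nonneg_of_hasDerivAt_linear_of_forcing_nonneg (g := fun x => c * u x)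
        (h := fun x => b * m (x - τ) * u (x - τ)) (huc.const_mul c) hmc.continuousOn
        (fun x hx => (hdm x hx.1.le).congr_deriv (by ring)) (fun x hx => ?_)
        (hm 0 ⟨by linarith, le_rfl⟩) t ⟨ht₀.le, ht₂⟩
      have hx : x - τ ∈ Icc (-τ) (n * τ) := by
        push_cast at hx
        constructor <;> linarith [hx.1, hx.2]
      exact mul_nonneg (mul_nonneg hb (ih _ hx)) (hu _ hx.1)
  obtain ⟨n, hn⟩ := exists_nat_ge (t / τ)
  exact hstep n t ⟨ht, (div_le_iff₀ hτ).1 hn⟩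

theorem AntitoneOn.exists_tendsto_atTop_of_nonneg {f : ℝ → ℝ} {a : ℝ}
    (hf : AntitoneOn f (Ici a)) (h₀ : ∀ x ∈ Ici a, 0 ≤ f x) :
    ∃ L ∈ Icc 0 (f a), Tendsto f atTop (𝓝 L) := by
  set g : ℝ → ℝ := fun t => f (max t a)
  have hg : Antitone g := fun s t hst =>
    hf (le_max_right s a) (le_max_right t a) (max_le_max hst le_rfl)
  have hg₀ : ∀ t, 0 ≤ g t := fun t => h₀ _ (le_max_right t a)
  refine ⟨⨅ t, g t, ⟨le_ciInf hg₀, ?_⟩, ?_⟩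
  · simpa [g] using ciInf_le ⟨0, forall_mem_range.2 hg₀⟩ a
  · refine (tendsto_atTop_ciInf hg ⟨0, forall_mem_range.2 hg₀⟩).congr' ?_
    filter_upwards [eventually_ge_atTop a] with t ht
    simp [g, max_eq_left ht]

theorem exists_tendsto_and_integrableOn_of_hasDerivAt_neg_mul {c : ℝ} {m u : ℝ → ℝ}
    (hc : 0 < c) (huc : Continuous u) (hdu : ∀ t : ℝ, 0 ≤ t → HasDerivAt u (-c * m t * u t) t)
    (hm : ∀ t : ℝ, 0 ≤ t → 0 ≤ m t) (hu : ∀ t : ℝ, 0 ≤ t → 0 ≤ u t) :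
    (∃ L ∈ Icc 0 (u 0), Tendsto u atTop (𝓝 L)) ∧ IntegrableOn (fun s => m s * u s) (Ici 0) := by
  have hu' : ∀ x ∈ Ioi (0 : ℝ), -c * m x * u x ≤ 0 := fun x hx => by
    have := mul_nonneg (mul_nonneg hc.le (hm x (le_of_lt hx))) (hu x (le_of_lt hx))
    linarith
  have hanti : AntitoneOn u (Ici 0) := by
    refine antitoneOn_of_hasDerivWithinAt_nonpos (convex_Ici 0) huc.continuousOn
      (fun x hx => ?_) (fun x hx => hu' x ?_) <;> rw [interior_Ici] at hx
    · exact (hdu x (le_of_lt hx)).hasDerivWithinAt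
    · exact hx
  obtain ⟨L, hL, hlim⟩ := hanti.exists_tendsto_atTop_of_nonneg hu
  refine ⟨⟨L, hL, hlim⟩, ?_⟩
  have hint := integrableOn_Ioi_deriv_of_nonpos' hdu hu' hlim
  rw [integrableOn_Ici_iff_integrableOn_Ioi]
  refine IntegrableOn.congr_fun (hint.const_mul (-c)⁻¹) (fun x _ => ?_) measurableSet_Ioi
  field_simp

theorem stmt_19_general
    (K r τ : ℝ) (hK : 0 < K) (hr : 0 < r) (hτ : 0 < τ)
    (m u : ℝ → ℝ)
    (hmc : Continuous m) (huc : Continuous u)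
    (hdm : ∀ t : ℝ, 0 ≤ t →
      HasDerivAt m (-(r / K) * m t * u t + 2 * (r / K) * m (t - τ) * u (t - τ)) t)
    (hdu : ∀ t : ℝ, 0 ≤ t → HasDerivAt u (-(r / K) * m t * u t) t)
    (hmnn : ∀ θ ∈ Set.Icc (-τ) (0 : ℝ), 0 ≤ m θ)
    (hunn : ∀ θ ∈ Set.Icc (-τ) (0 : ℝ), 0 ≤ u θ)
:
    (∃ L ∈ Set.Icc (0 : ℝ) (u 0), Filter.Tendsto u Filter.atTop (nhds L)) ∧
    MeasureTheory.IntegrableOn (fun s => m s * u s) (Set.Ici (0 : ℝ)) := by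
  have hc : 0 < r / K := div_pos hr hK
  have hu : ∀ t : ℝ, -τ ≤ t → 0 ≤ u t := fun t ht => (le_or_gt t 0).elim
    (fun ht₀ => hunn t ⟨ht, ht₀⟩)
    (fun ht₀ => nonneg_of_hasDerivAt_neg_mul hmc huc hdu (hunn 0 ⟨by linarith, le_rfl⟩) t ht₀.le)
  have hm := nonneg_of_hasDerivAt_delay_s19 hτ (by positivity) hmc huc hdm hmnn hu
  exact exists_tendsto_and_integrableOn_of_hasDerivAt_neg_mul hc huc hdu
    (fun t ht => hm t (by linarith)) (fun t ht => hu t (by linarith))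

theorem stmt_19
    (K r τ : ℝ) (hK : 0 < K) (hr : 0 < r) (hτ : 0 < τ)
    (m p q u : ℝ → ℝ)
    (hmc : Continuous m) (hpc : Continuous p) (hqc : Continuous q) (huc : Continuous u)
    (hdm : ∀ t : ℝ, 0 ≤ t →
      HasDerivAt m (-(r / K) * m t * u t + 2 * (r / K) * m (t - τ) * u (t - τ)) t)
    (hdp : ∀ t : ℝ, 0 ≤ t →
      HasDerivAt p ((r / K) * m t * u t - (r / K) * m (t - τ) * u (t - τ)) t)
    (hdq : ∀ t : ℝ, 0 ≤ t →
      HasDerivAt q ((r / K) * m t * u t - (r / K) * m (t - τ) * u (t - τ)) t)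
    (hdu : ∀ t : ℝ, 0 ≤ t → HasDerivAt u (-(r / K) * m t * u t) t)
    (hmnn : ∀ θ ∈ Set.Icc (-τ) (0 : ℝ), 0 ≤ m θ)
    (hpnn : ∀ θ ∈ Set.Icc (-τ) (0 : ℝ), 0 ≤ p θ)
    (hqnn : ∀ θ ∈ Set.Icc (-τ) (0 : ℝ), 0 ≤ q θ)
    (hunn : ∀ θ ∈ Set.Icc (-τ) (0 : ℝ), 0 ≤ u θ)
    (hsum : m 0 + p 0 + q 0 + u 0 = K)
    (hpin : p 0 = (r / K) * ∫ s in (-τ)..(0 : ℝ), m s * u s)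
    (hqin : q 0 = (r / K) * ∫ s in (-τ)..(0 : ℝ), m s * u s)
:
    (∃ L ∈ Set.Icc (0 : ℝ) (u 0), Filter.Tendsto u Filter.atTop (nhds L)) ∧
    MeasureTheory.IntegrableOn (fun s => m s * u s) (Set.Ici (0 : ℝ)) :=
  stmt_19_general K r τ hK hr hτ m u hmc huc hdm hdu hmnn hunn
end
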